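/- In the semigroup H, the element L itself is nonzero, and more generally L·a_i ≠ 0 for each i ∈ {1,2,3}. -/

import Mathlib

inductive Phi
  | L | M | P | Q | R | g | s1 | s2 | t1 | t2 | t3 | a1 | a2 | a3
deriving DecidableEq

open Phi

abbrev W0 := WithZero (FreeMonoid Phi)

def w (l : List Phi) : W0 := ((FreeMonoid.ofList l : FreeMonoid Phi) : W0)

def ai : Fin 3 → Phi
  | 0 => a1 | 1 => a2 | 2 => a3

def ti : Fin 3 → Phi
  | 0 => t1 | 1 => t2 | 2 => t3

def si : Fin 2 → Phi
  | 0 => s1 | 1 => s2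

/-- `x` is one of the letters `a1, a2, a3`. -/
def isA (x : Phi) : Prop := x = a1 ∨ x = a2 ∨ x = a3

/-- The defining relations (1)–(14) of the semigroup `H`. -/
inductive rel : W0 → W0 → Prop
  | r1L (x : Phi) : rel (w [x, L]) 0
  | r1M (x : Phi) : rel (w [x, M]) 0
  | r2 : rel (w [L]) (w [M, P, g])
  | r3 (i : Fin 3) : rel (w [g, ai i]) (w [ai i, g])
  | r4 (x : Phi) (h : ¬ isA x) : rel (w [g, x]) 0
  | r5 (i j : Fin 3) : rel (w [ai i, g, ai j]) (w [ai i, R, s1, Q, ai j])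
  | r6 (i : Fin 3) (x : Phi) (h : x = R ∨ isA x) : rel (w [ti i, x]) (w [x, ti i])
  | r7 (i : Fin 3) : rel (w [P, ai i, ti i]) (w [ai i, P, s1])
  | r8 (i j : Fin 3) (h : i ≠ j) : rel (w [P, ai j, ti i]) (w [ai j, P, s2])
  | r9 (i : Fin 3) (j : Fin 2) : rel (w [si j, ai i]) (w [ai i, si j])
  | r10 : rel (w [s1, R]) (w [R, s1])
  | r11 (i : Fin 3) : rel (w [s1, Q, ai i]) (w [ti i, ai i, Q])
  | r12 : rel (w [P, R, s1]) 0
  | r13 (i : Fin 3) : rel (w [s2, R, ai i]) (w [ai i, s2, R])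
  | r14 (i : Fin 3) : rel (w [s2, R, Q, ai i]) (w [R, ti i, ai i, Q])

/-- The congruence on the free monoid with zero generated by the relations. -/
def hCon : Con W0 := conGen rel

/-- The semigroup (with zero) `H` of the paper. -/
abbrev H := hCon.Quotient

/-- The quotient map. -/
def q : W0 →* H := hCon.mk'

/-- `l` is a word in the letters `a1, a2, a3`. -/
def Aword (l : List Phi) : Prop := ∀ x ∈ l, isA x

/-- `l` is square-free: it contains no factor `Y ++ Y` with `Y` nonempty. -/
def SqFree (l : List Phi) : Prop := ∀ Y : List Phi, Y ≠ [] → ¬ (Y ++ Y) <:+: l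

/-!
`H` maps onto a semigroup of partial injective maps of the six states `0, …, 5`, in which
`M : 1 ↦ 0`, `P : 2 ↦ 1`, `g : 3 ↦ 2, 5 ↦ 4`, `L : 3 ↦ 0`, each `aᵢ : 4 ↦ 2, 5 ↦ 3`, and the
letters `Q, R, s₁, s₂, tᵢ` act as the empty map. Every relation holds there, while `L·aᵢ`
sends `5` to `0`.
-/

lemma map_eq_of_q_eq {N F : Type*} [Mul N] [FunLike F W0 N] [MulHomClass F W0 N] (f : F)
    (hf : ∀ x y, rel x y → f x = f y) {x y : W0} (h : q x = q y) : f x = f y :=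
  (Con.conGen_le.mpr hf : hCon ≤ Con.ker f) (hCon.eq.mp h)

open Matrix

/-- Partial maps are encoded as `0/1` matrices, `single i j 1` being the arrow `j ↦ i`. -/
def model : Phi → Matrix (Fin 6) (Fin 6) ℕ
  | M => single 0 1 1
  | P => single 1 2 1
  | L => single 0 3 1
  | g => single 2 3 1 + single 4 5 1
  | a1 | a2 | a3 => single 2 4 1 + single 3 5 1
  | _ => 0

def modelHom : W0 →*₀ Matrix (Fin 6) (Fin 6) ℕ := WithZero.lift' (FreeMonoid.lift model)

lemma modelHom_w (l : List Phi) : modelHom (w l) = (l.map model).prod := by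
  simp [modelHom, w]

lemma modelHom_eq_of_rel {x y : W0} (h : rel x y) : modelHom x = modelHom y := by
  cases h <;>
    simp only [modelHom_w, map_zero, List.map_cons, List.map_nil, List.prod_cons, List.prod_nil]
  case r1L x | r1M x => cases x <;> decide
  case r4 x hx => cases x <;> first | decide | simp [isA] at hx
  case r6 i x _ => cases x <;> revert i <;> decide
  case r8 i j _ => revert i j; decide
  case r3 i | r7 i | r11 i | r13 i | r14 i => revert i; decide
  case r5 i j | r9 i j => revert i j; decide
  all_goals decide

/-- `L ≠ 0` in `H`, and `L·aᵢ ≠ 0` for each `i`. -/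
theorem stmt18 : q (w [L]) ≠ q 0 ∧ ∀ i : Fin 3, q (w [L, ai i]) ≠ q 0 := by
  have q_ne_zero (l : List Phi) (hl : (l.map model).prod ≠ 0) : q (w l) ≠ q 0 := fun h =>
    hl (by simpa [modelHom_w] using map_eq_of_q_eq modelHom (fun _ _ => modelHom_eq_of_rel) h)
  exact ⟨q_ne_zero _ (by decide), fun i => q_ne_zero _ (by revert i; decide)⟩
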